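/- arXiv:1608.02999 — 3 statements merged into one kernel-verified Lean document; each statement's English description precedes it below -/
import Mathlib

section
/- Suppose ν: G × G → V is continuous and satisfies the 2-cocycle identity ν(g₁g₂, g₃) + ν(g₁, g₂) = ν(g₁, g₂g₃) + ρ(g₁)(ν(g₂, g₃)) for all g₁, g₂, g₃ ∈ G. Then d(Hν) = ν; that is, for all g₁, g₂ ∈ G one has (Hν)(g₁) − (Hν)(g₁g₂) + ρ(g₁)((Hν)(g₂)) = ν(g₁, g₂). -/
open MeasureTheory

/-!
Apply `ρ(x)⁻¹` to the cocycle identity at `(x, g₁, g₂)` and average over `x`. Right invariance of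
`μ` turns the average of `ρ(x)⁻¹ ν(x g₁, g₂)` into `ρ(g₁) (Hν)(g₂)`, while the term
`ρ(x)⁻¹ ρ(x) ν(g₁, g₂) = ν(g₁, g₂)` is constant in `x` and averages to itself, leaving
`ρ(g₁) (Hν)(g₂) + (Hν)(g₁) = (Hν)(g₁ g₂) + ν(g₁, g₂)`.
-/

section Representation

variable {G V : Type*} [Group G] [AddCommGroup V] [Module ℝ V] (ρ : G →* (V →ₗ[ℝ] V)ˣ)

theorem apply_inv_apply_mul (g x : G) (v : V) :
    (ρ g : V →ₗ[ℝ] V) ((↑(ρ (x * g))⁻¹ : V →ₗ[ℝ] V) v) = (↑(ρ x)⁻¹ : V →ₗ[ℝ] V) v := by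
  rw [← Module.End.mul_apply, ← Units.val_mul, ← map_inv, ← map_inv, ← map_mul,
    mul_inv_rev, mul_inv_cancel_left]

theorem inv_apply_cocycle {ν : G × G → V}
    (hcocycle : ∀ g₁ g₂ g₃ : G,
      ν (g₁ * g₂, g₃) + ν (g₁, g₂) = ν (g₁, g₂ * g₃) + (ρ g₁ : V →ₗ[ℝ] V) (ν (g₂, g₃)))
    (x g₁ g₂ : G) :
    (↑(ρ x)⁻¹ : V →ₗ[ℝ] V) (ν (x * g₁, g₂)) + (↑(ρ x)⁻¹ : V →ₗ[ℝ] V) (ν (x, g₁))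
      = (↑(ρ x)⁻¹ : V →ₗ[ℝ] V) (ν (x, g₁ * g₂)) + ν (g₁, g₂) := by
  have h := congrArg (↑(ρ x)⁻¹ : V →ₗ[ℝ] V) (hcocycle x g₁ g₂)
  rwa [map_add, map_add, ← Module.End.mul_apply, ← Units.val_mul, inv_mul_cancel,
    Units.val_one, Module.End.one_apply] at h

theorem continuous_inv_apply [TopologicalSpace G] [ContinuousInv G] [TopologicalSpace V]
    (hρ : Continuous fun p : G × V => (ρ p.1 : V →ₗ[ℝ] V) p.2) {w : G → V} (hw : Continuous w) :
    Continuous fun x => (↑(ρ x)⁻¹ : V →ₗ[ℝ] V) (w x) := by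
  simp only [← map_inv]
  exact hρ.comp (continuous_inv.prodMk hw)

end Representation

section Averaging

variable {G V : Type*} [Group G] [MeasurableSpace G]
  [NormedAddCommGroup V] [NormedSpace ℝ V] [FiniteDimensional ℝ V] (ρ : G →* (V →ₗ[ℝ] V)ˣ)

theorem integral_inv_apply_mul_right [MeasurableMul G] (μ : Measure G) [μ.IsMulRightInvariant]
    (w : G → V) (g : G) :
    ∫ x, (↑(ρ x)⁻¹ : V →ₗ[ℝ] V) (w (x * g)) ∂μ
      = (ρ g : V →ₗ[ℝ] V) (∫ x, (↑(ρ x)⁻¹ : V →ₗ[ℝ] V) (w x) ∂μ) := by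
  let L := (LinearMap.GeneralLinearGroup.toLinearEquiv (ρ g)).toContinuousLinearEquiv
  calc ∫ x, (↑(ρ x)⁻¹ : V →ₗ[ℝ] V) (w (x * g)) ∂μ
      = ∫ x, L ((↑(ρ (x * g))⁻¹ : V →ₗ[ℝ] V) (w (x * g))) ∂μ :=
        integral_congr_ae (.of_forall fun x => (apply_inv_apply_mul ρ g x _).symm)
    _ = ∫ x, L ((↑(ρ x)⁻¹ : V →ₗ[ℝ] V) (w x)) ∂μ :=
        integral_mul_right_eq_self (fun x => L ((↑(ρ x)⁻¹ : V →ₗ[ℝ] V) (w x))) g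
    _ = (ρ g : V →ₗ[ℝ] V) (∫ x, (↑(ρ x)⁻¹ : V →ₗ[ℝ] V) (w x) ∂μ) :=
        L.integral_comp_comm _

end Averaging

theorem coboundary_of_averaged_cocycle_general
    {G V : Type*}
    [Group G] [TopologicalSpace G] [IsTopologicalGroup G] [CompactSpace G]
    [MeasurableSpace G] [BorelSpace G]
    (μ : Measure G) [IsProbabilityMeasure μ] [μ.IsMulRightInvariant]
    [NormedAddCommGroup V] [NormedSpace ℝ V] [FiniteDimensional ℝ V]
    (ρ : G →* (V →ₗ[ℝ] V)ˣ)
    (hρ : Continuous fun p : G × V => (ρ p.1 : V →ₗ[ℝ] V) p.2)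
    (ν : G × G → V) (hν : Continuous ν)
    (hcocycle : ∀ g₁ g₂ g₃ : G,
      ν (g₁ * g₂, g₃) + ν (g₁, g₂) = ν (g₁, g₂ * g₃) + (ρ g₁ : V →ₗ[ℝ] V) (ν (g₂, g₃))) :
    ∀ g₁ g₂ : G,
      (∫ x, (((ρ x)⁻¹ : (V →ₗ[ℝ] V)ˣ) : V →ₗ[ℝ] V) (ν (x, g₁)) ∂μ)
        - (∫ x, (((ρ x)⁻¹ : (V →ₗ[ℝ] V)ˣ) : V →ₗ[ℝ] V) (ν (x, g₁ * g₂)) ∂μ)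
        + (ρ g₁ : V →ₗ[ℝ] V) (∫ x, (((ρ x)⁻¹ : (V →ₗ[ℝ] V)ˣ) : V →ₗ[ℝ] V) (ν (x, g₂)) ∂μ)
        = ν (g₁, g₂) := by
  intro g₁ g₂
  have integrable {w : G → V} (hw : Continuous w) :
      Integrable (fun x => (↑(ρ x)⁻¹ : V →ₗ[ℝ] V) (w x)) μ :=
    (continuous_inv_apply ρ hρ hw).integrable_of_hasCompactSupport (.of_compactSpace _)
  have averaged := congrArg (∫ x, · x ∂μ) (funext (inv_apply_cocycle ρ hcocycle · g₁ g₂))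
  simp only at averaged
  rw [integral_add (integrable (by fun_prop)) (integrable (by fun_prop)),
    integral_add (integrable (by fun_prop)) (integrable_const _),
    integral_inv_apply_mul_right ρ μ (fun x => ν (x, g₂)), integral_const, probReal_univ,
    one_smul] at averaged
  rw [sub_add_eq_add_sub, add_comm, averaged, add_sub_cancel_left]

/-- If `ν : G × G → V` is a continuous 2-cocycle for the representation `ρ` on a compact
group `G` with right-invariant Haar probability measure `μ`, then `d(Hν) = ν`, where
`(Hν)(g) = ∫ x, ρ(x)⁻¹ (ν(x,g)) dμ(x)`. -/
theorem coboundary_of_averaged_cocycle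
    {G V : Type*}
    [Group G] [TopologicalSpace G] [IsTopologicalGroup G] [CompactSpace G] [T2Space G]
    [MeasurableSpace G] [BorelSpace G]
    (μ : Measure G) [IsProbabilityMeasure μ] [μ.IsMulRightInvariant]
    [NormedAddCommGroup V] [NormedSpace ℝ V] [FiniteDimensional ℝ V]
    (ρ : G →* (V →ₗ[ℝ] V)ˣ)
    (hρ : Continuous fun p : G × V => (ρ p.1 : V →ₗ[ℝ] V) p.2)
    (ν : G × G → V) (hν : Continuous ν)
    (hcocycle : ∀ g₁ g₂ g₃ : G,
      ν (g₁ * g₂, g₃) + ν (g₁, g₂) = ν (g₁, g₂ * g₃) + (ρ g₁ : V →ₗ[ℝ] V) (ν (g₂, g₃))) :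
    ∀ g₁ g₂ : G,
      (∫ x, (((ρ x)⁻¹ : (V →ₗ[ℝ] V)ˣ) : V →ₗ[ℝ] V) (ν (x, g₁)) ∂μ)
        - (∫ x, (((ρ x)⁻¹ : (V →ₗ[ℝ] V)ˣ) : V →ₗ[ℝ] V) (ν (x, g₁ * g₂)) ∂μ)
        + (ρ g₁ : V →ₗ[ℝ] V) (∫ x, (((ρ x)⁻¹ : (V →ₗ[ℝ] V)ˣ) : V →ₗ[ℝ] V) (ν (x, g₂)) ∂μ)
        = ν (g₁, g₂) :=
  coboundary_of_averaged_cocycle_general μ ρ hρ ν hν hcocycle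
end

section
/- Suppose ν: G × G → V is continuous, satisfies ν(g, e) = 0 = ν(e, g) for all g ∈ G, and satisfies the 2-cocycle identity ν(g₁g₂, g₃) + ν(g₁, g₂) = ν(g₁, g₂g₃) + ρ(g₁)(ν(g₂, g₃)) for all g₁, g₂, g₃ ∈ G. Then there exists a continuous function μ': G → V with μ'(e) = 0 such that for all g₁, g₂ ∈ G: μ'(g₁) − μ'(g₁g₂) + ρ(g₁)(μ'(g₂)) = ν(g₁, g₂). In other words, every continuous normalized 2-cocycle on a compact group with values in a continuous finite-dimensional real representation is the coboundary of a continuous normalized 1-cochain. -/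
/-!
Take `μ' g = ∫ ν (g, h) dμ(h)`. Integrating the cocycle identity over `g₃` turns
`ν (g₁, g₂ * g₃)` into `μ' g₁` by left invariance of `μ`, and `ρ g₁ (ν (g₂, g₃))` into
`ρ g₁ (μ' g₂)` since `ρ g₁` is a continuous linear map; what remains is the coboundary equation.
Left invariance holds because on a compact group the image under inversion of a right-invariant
probability measure is a Haar probability measure, and these are unique.
Continuity of `μ'` comes from `g ↦ ν (g, ·)` being continuous into `C(G, V)` with the sup norm,
on which integration is `1`-Lipschitz.
-/

open MeasureTheory

namespace MeasureTheory.Measure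

variable {G : Type*} [Group G] [TopologicalSpace G] [IsTopologicalGroup G] [CompactSpace G]
  [MeasurableSpace G] [BorelSpace G]

theorem isHaarMeasure_inv_of_isMulRightInvariant (μ : Measure G) [IsProbabilityMeasure μ]
    [μ.IsMulRightInvariant] : μ.inv.IsHaarMeasure := by
  have : IsProbabilityMeasure μ.inv := isProbabilityMeasure_map measurable_inv.aemeasurable
  have : μ.inv.IsOpenPosMeasure :=
    isOpenPosMeasure_of_mulLeftInvariant_of_compact Set.univ isCompact_univ (by simp)
  constructor

theorem eq_of_isMulRightInvariant_of_isProbabilityMeasure (μ ν : Measure G)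
    [IsProbabilityMeasure μ] [μ.IsMulRightInvariant]
    [IsProbabilityMeasure ν] [ν.IsMulRightInvariant] : μ = ν := by
  have := μ.isHaarMeasure_inv_of_isMulRightInvariant
  have := ν.isHaarMeasure_inv_of_isMulRightInvariant
  have : IsProbabilityMeasure μ.inv := isProbabilityMeasure_map measurable_inv.aemeasurable
  have : IsProbabilityMeasure ν.inv := isProbabilityMeasure_map measurable_inv.aemeasurable
  rw [← μ.inv_inv, ← ν.inv_inv, isHaarMeasure_eq_of_isProbabilityMeasure μ.inv ν.inv]

theorem isMulLeftInvariant_of_isMulRightInvariant (μ : Measure G)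
    [IsProbabilityMeasure μ] [μ.IsMulRightInvariant] : μ.IsMulLeftInvariant where
  map_mul_left_eq_self g := by
    have : IsProbabilityMeasure (μ.map (g * ·)) :=
      isProbabilityMeasure_map (measurable_const_mul g).aemeasurable
    exact eq_of_isMulRightInvariant_of_isProbabilityMeasure _ μ

end MeasureTheory.Measure

theorem ContinuousMap.lipschitzWith_one_integral {X E : Type*} [TopologicalSpace X]
    [CompactSpace X] [MeasurableSpace X] [OpensMeasurableSpace X]
    [NormedAddCommGroup E] [NormedSpace ℝ E]
    (μ : Measure X) [IsProbabilityMeasure μ] :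
    LipschitzWith 1 fun f : C(X, E) => ∫ x, f x ∂μ := by
  refine LipschitzWith.of_dist_le_mul fun f g => ?_
  have hint (f : C(X, E)) : Integrable f μ :=
    f.continuous.integrable_of_hasCompactSupport (HasCompactSupport.of_compactSpace _)
  rw [dist_eq_norm, NNReal.coe_one, one_mul, ← integral_sub (hint f) (hint g)]
  calc ‖∫ x, (f x - g x) ∂μ‖ ≤ dist f g * μ.real Set.univ :=
        norm_integral_le_of_norm_le_const <| .of_forall fun x => by
          rw [← dist_eq_norm]; exact dist_apply_le_dist x
    _ = dist f g := by simp

theorem continuous_parametric_integral_of_compactSpace {X Y E : Type*} [TopologicalSpace X]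
    [TopologicalSpace Y] [CompactSpace Y] [MeasurableSpace Y] [OpensMeasurableSpace Y]
    [NormedAddCommGroup E] [NormedSpace ℝ E] (μ : Measure Y) [IsProbabilityMeasure μ]
    {F : X × Y → E} (hF : Continuous F) : Continuous fun x => ∫ y, F (x, y) ∂μ :=
  (ContinuousMap.lipschitzWith_one_integral μ).continuous.comp
    (ContinuousMap.curry ⟨F, hF⟩).continuous

theorem integral_snd_coboundary_eq_of_cocycle {G V : Type*} [Group G]
    [MeasurableSpace G] [MeasurableMul G] (μ : Measure G) [IsProbabilityMeasure μ]
    [μ.IsMulLeftInvariant] [NormedAddCommGroup V] [NormedSpace ℝ V] [FiniteDimensional ℝ V]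
    (ρ : G → V →ₗ[ℝ] V) (ν : G × G → V) (hint : ∀ g, Integrable (fun h => ν (g, h)) μ)
    (hcocycle : ∀ g₁ g₂ g₃ : G,
      ν (g₁ * g₂, g₃) + ν (g₁, g₂) = ν (g₁, g₂ * g₃) + ρ g₁ (ν (g₂, g₃)))
    (g₁ g₂ : G) :
    ∫ h, ν (g₁, h) ∂μ - ∫ h, ν (g₁ * g₂, h) ∂μ + ρ g₁ (∫ h, ν (g₂, h) ∂μ) = ν (g₁, g₂) := by
  have hρ_integral : ρ g₁ (∫ h, ν (g₂, h) ∂μ) = ∫ h, ρ g₁ (ν (g₂, h)) ∂μ :=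
    ((ρ g₁).toContinuousLinearMap.integral_comp_comm (hint g₂)).symm
  have hρ_integrable : Integrable (fun h => ρ g₁ (ν (g₂, h))) μ :=
    (ρ g₁).toContinuousLinearMap.integrable_comp (hint g₂)
  have hintegrated := congrArg (∫ h, · h ∂μ) (funext (hcocycle g₁ g₂))
  simp only at hintegrated
  rw [integral_add (hint _) (integrable_const _), integral_add ((hint g₁).comp_mul_left g₂)
    hρ_integrable, integral_mul_left_eq_self (fun h => ν (g₁, h)), integral_const, probReal_univ,
    one_smul] at hintegrated
  rw [hρ_integral, eq_sub_of_add_eq' hintegrated]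
  abel

theorem continuous_cocycle_is_coboundary_general
    {G V : Type*}
    [Group G] [TopologicalSpace G] [IsTopologicalGroup G] [CompactSpace G]
    [MeasurableSpace G] [BorelSpace G]
    (μ : Measure G) [IsProbabilityMeasure μ] [μ.IsMulRightInvariant]
    [NormedAddCommGroup V] [NormedSpace ℝ V] [FiniteDimensional ℝ V]
    (ρ : G →* (V →ₗ[ℝ] V)ˣ)
    (ν : G × G → V) (hν : Continuous ν)
    (hnorm : ∀ g : G, ν (g, 1) = 0 ∧ ν (1, g) = 0)
    (hcocycle : ∀ g₁ g₂ g₃ : G,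
      ν (g₁ * g₂, g₃) + ν (g₁, g₂) = ν (g₁, g₂ * g₃) + (ρ g₁ : V →ₗ[ℝ] V) (ν (g₂, g₃))) :
    ∃ μ' : G → V, Continuous μ' ∧ μ' 1 = 0 ∧
      ∀ g₁ g₂ : G,
        μ' g₁ - μ' (g₁ * g₂) + (ρ g₁ : V →ₗ[ℝ] V) (μ' g₂) = ν (g₁, g₂) := by
  have := μ.isMulLeftInvariant_of_isMulRightInvariant
  have hint (g : G) : Integrable (fun h => ν (g, h)) μ :=
    (hν.comp (continuous_const.prodMk continuous_id)).integrable_of_hasCompactSupport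
      (HasCompactSupport.of_compactSpace _)
  exact ⟨fun g => ∫ h, ν (g, h) ∂μ, continuous_parametric_integral_of_compactSpace μ hν,
    by simp [(hnorm _).2],
    integral_snd_coboundary_eq_of_cocycle μ (fun g => ρ g) ν hint hcocycle⟩

/-- Every continuous normalized 2-cocycle on a compact group with values in a continuous
finite-dimensional real representation is the coboundary of a continuous normalized
1-cochain. -/
theorem continuous_cocycle_is_coboundary
    {G V : Type*}
    [Group G] [TopologicalSpace G] [IsTopologicalGroup G] [CompactSpace G] [T2Space G]
    [MeasurableSpace G] [BorelSpace G]
    (μ : Measure G) [IsProbabilityMeasure μ] [μ.IsMulRightInvariant]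
    [NormedAddCommGroup V] [NormedSpace ℝ V] [FiniteDimensional ℝ V]
    (ρ : G →* (V →ₗ[ℝ] V)ˣ)
    (hρ : Continuous fun p : G × V => (ρ p.1 : V →ₗ[ℝ] V) p.2)
    (ν : G × G → V) (hν : Continuous ν)
    (hnorm : ∀ g : G, ν (g, 1) = 0 ∧ ν (1, g) = 0)
    (hcocycle : ∀ g₁ g₂ g₃ : G,
      ν (g₁ * g₂, g₃) + ν (g₁, g₂) = ν (g₁, g₂ * g₃) + (ρ g₁ : V →ₗ[ℝ] V) (ν (g₂, g₃))) :
    ∃ μ' : G → V, Continuous μ' ∧ μ' 1 = 0 ∧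
      ∀ g₁ g₂ : G,
        μ' g₁ - μ' (g₁ * g₂) + (ρ g₁ : V →ₗ[ℝ] V) (μ' g₂) = ν (g₁, g₂) :=
  continuous_cocycle_is_coboundary_general μ ρ ν hν hnorm hcocycle
end

section
/- Let G be a compact Hausdorff topological group with a right-invariant Borel probability (Haar) measure, V a finite-dimensional real vector space regarded as an additive topological group, H a topological group, ε: V → H a continuous group homomorphism, and α: H → GL(V), ρ: G → GL(V) group homomorphisms whose action maps H × V → V and G × V → V are continuous, such that ε(α(h)(v)) = h ε(v) h⁻¹ for all h ∈ H, v ∈ V, and α(ε(v)) = id_V for all v ∈ V. Let E_ρ be the subspace of C(G,H) × C(G×G,V) (compact-open topologies) consisting of pairs (ζ, ν) of continuous maps satisfying: (1) ζ(e) = e and ν(g,e) = 0 = ν(e,g) for all g; (2) ζ(g₁g₂) = ε(ν(g₁,g₂)) ζ(g₁) ζ(g₂); (3) ν(g₁g₂,g₃) + ν(g₁,g₂) = ν(g₁,g₂g₃) + ρ(g₁)(ν(g₂,g₃)); (4) α(ζ(g)) = ρ(g) for all g. Let E⁰_ρ = {(ζ, ν) ∈ E_ρ : ν = 0}. Then E⁰_ρ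 is a strong deformation retract of E_ρ: there exists a continuous map K: [0,1] × E_ρ → E_ρ with K(0, x) = x for all x ∈ E_ρ, K(t, x) = x for all t ∈ [0,1] and x ∈ E⁰_ρ, and K(1, x) ∈ E⁰_ρ for all x ∈ E_ρ. -/
open MeasureTheory

/-- The defining conditions for a point of the space `E_ρ ⊆ C(G,H) × C(G×G,V)`:
(1) normalization, (2) `ζ(g₁g₂) = ε(ν(g₁,g₂)) ζ(g₁) ζ(g₂)`, (3) the 2-cocycle identity
for `ν`, and (4) `α ∘ ζ = ρ`. -/
def IsCocyclePair {G H V : Type*}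
    [Group G] [TopologicalSpace G] [Group H] [TopologicalSpace H]
    [NormedAddCommGroup V] [NormedSpace ℝ V]
    (ε : V → H) (α : H →* (V →ₗ[ℝ] V)ˣ) (ρ : G →* (V →ₗ[ℝ] V)ˣ)
    (p : C(G, H) × C(G × G, V)) : Prop :=
  (p.1 1 = 1 ∧ ∀ g : G, p.2 (g, 1) = 0 ∧ p.2 (1, g) = 0)
  ∧ (∀ g₁ g₂ : G, p.1 (g₁ * g₂) = ε (p.2 (g₁, g₂)) * p.1 g₁ * p.1 g₂)
  ∧ (∀ g₁ g₂ g₃ : G, p.2 (g₁ * g₂, g₃) + p.2 (g₁, g₂)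
      = p.2 (g₁, g₂ * g₃) + (ρ g₁ : V →ₗ[ℝ] V) (p.2 (g₂, g₃)))
  ∧ (∀ g : G, α (p.1 g) = ρ g)


/-!
Averaging against the right-invariant probability measure contracts continuous 2-cocycles:
`(H ν)(g) = ∫ ρ(x)⁻¹ ν(x, g) dμ(x)` satisfies `d(H ν) = ν` for every cocycle `ν`, because
integrating the cocycle identity at `(x, g₁, g₂)` and translating `x ↦ x g₁` turns the term
`ν(x g₁, g₂)` into `ρ(g₁) (H ν)(g₂)`. On the other hand, the crossed-module identities make
`(ζ, ν) ↦ (ε ∘ φ · ζ, ν - dφ)` preserve cocycle pairs for every `φ : G → V` with `φ(1) = 0`.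
Taking `φ = t · H ν` gives the deformation `(ζ, ν) ↦ (ε(t · H ν) ζ, (1 - t) ν)`.
-/

namespace ContinuousMap

variable {X E : Type*} [TopologicalSpace X] [CompactSpace X] [MeasurableSpace X]
  [OpensMeasurableSpace X] [NormedAddCommGroup E]

theorem integrable (μ : Measure X) [IsFiniteMeasure μ] (f : C(X, E)) : Integrable f μ :=
  f.continuous.integrable_of_hasCompactSupport (.of_compactSpace f)

variable [NormedSpace ℝ E] (μ : Measure X) [IsProbabilityMeasure μ]

noncomputable def integralCLM : C(X, E) →L[ℝ] E :=
  LinearMap.mkContinuous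
    { toFun f := ∫ x, f x ∂μ
      map_add' f g := integral_add (f.integrable μ) (g.integrable μ)
      map_smul' c f := integral_smul c f }
    1 fun f => by
      simpa using norm_integral_le_of_norm_le_const (μ := μ)
        (Filter.Eventually.of_forall f.norm_coe_le_norm)

end ContinuousMap

section Cochains

variable {G V : Type*} [Group G] [AddCommGroup V] [Module ℝ V] (ρ : G →* (V →ₗ[ℝ] V)ˣ)

def IsTwoCocycle (ν : G × G → V) : Prop :=
  ∀ g₁ g₂ g₃ : G, ν (g₁ * g₂, g₃) + ν (g₁, g₂) = ν (g₁, g₂ * g₃) + (ρ g₁ : V →ₗ[ℝ] V) (ν (g₂, g₃))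

def coboundary (φ : G → V) (q : G × G) : V :=
  φ q.1 - φ (q.1 * q.2) + (ρ q.1 : V →ₗ[ℝ] V) (φ q.2)

variable {ρ}

theorem isTwoCocycle_coboundary (φ : G → V) : IsTwoCocycle ρ (coboundary ρ φ) := by
  intro g₁ g₂ g₃
  simp only [coboundary, map_add, map_sub, map_mul, Units.val_mul, Module.End.mul_apply, mul_assoc]
  abel

theorem IsTwoCocycle.sub {ν ν' : G × G → V} (hν : IsTwoCocycle ρ ν) (hν' : IsTwoCocycle ρ ν') :
    IsTwoCocycle ρ (ν - ν') := by
  intro g₁ g₂ g₃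
  simp only [Pi.sub_apply, map_sub]
  linear_combination (norm := module) hν g₁ g₂ g₃ - hν' g₁ g₂ g₃

theorem coboundary_smul (t : ℝ) (φ : G → V) : coboundary ρ (t • φ) = t • coboundary ρ φ := by
  ext q
  simp only [coboundary, Pi.smul_apply, map_smul, smul_add, smul_sub]

end Cochains

section Averaging

variable {G V : Type*} [Group G] [TopologicalSpace G] [IsTopologicalGroup G] [CompactSpace G]
  [MeasurableSpace G] [OpensMeasurableSpace G] (μ : Measure G) [IsProbabilityMeasure μ]
  [NormedAddCommGroup V] [NormedSpace ℝ V] {ρ : G →* (V →ₗ[ℝ] V)ˣ}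
  (hρ : Continuous fun p : G × V => (ρ p.1 : V →ₗ[ℝ] V) p.2)

/-- The paper's `H`. -/
noncomputable def cochainAverage : C(C(G × G, V), C(G, V)) :=
  ContinuousMap.curry <| (ContinuousMap.integralCLM (E := V) μ : C(C(G, V), V)).comp <|
    ContinuousMap.curry
      ⟨fun q : (C(G × G, V) × G) × G => (ρ q.2⁻¹ : V →ₗ[ℝ] V) (q.1.1 (q.2, q.1.2)),
        hρ.comp <| continuous_snd.inv.prodMk <| continuous_eval.comp <|
          continuous_fst.fst.prodMk <| continuous_snd.prodMk continuous_fst.snd⟩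

theorem cochainAverage_apply (ν : C(G × G, V)) (g : G) :
    cochainAverage μ hρ ν g = ∫ x, (ρ x⁻¹ : V →ₗ[ℝ] V) (ν (x, g)) ∂μ := rfl

theorem cochainAverage_apply_one {ν : C(G × G, V)} (hν : ∀ g, ν (g, 1) = 0) :
    cochainAverage μ hρ ν 1 = 0 := by
  simp [cochainAverage_apply, hν]

@[simp]
theorem cochainAverage_zero : cochainAverage μ hρ 0 = 0 := by
  ext g
  simp [cochainAverage_apply]

variable [BorelSpace G] [μ.IsMulRightInvariant] [CompleteSpace V]

theorem IsTwoCocycle.coboundary_cochainAverage {ν : C(G × G, V)} (hν : IsTwoCocycle ρ ν) :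
    coboundary ρ (cochainAverage μ hρ ν) = ν := by
  ext ⟨g₁, g₂⟩
  have hint : ∀ f : G → V, Continuous f →
      Integrable (fun x => (ρ x⁻¹ : V →ₗ[ℝ] V) (f x)) μ :=
    fun f hf => ContinuousMap.integrable μ ⟨_, hρ.comp (continuous_inv.prodMk hf)⟩
  let ρ₁ : V →L[ℝ] V := ⟨ρ g₁, hρ.comp (Continuous.prodMk_right g₁)⟩
  have htranslate : ∫ x, (ρ x⁻¹ : V →ₗ[ℝ] V) (ν (x * g₁, g₂)) ∂μ
      = (ρ g₁ : V →ₗ[ℝ] V) (cochainAverage μ hρ ν g₂) := by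
    calc _ = ∫ x, ρ₁ ((ρ (x * g₁)⁻¹ : V →ₗ[ℝ] V) (ν (x * g₁, g₂))) ∂μ := by
            simp only [ρ₁, ContinuousLinearMap.coe_mk', ← Module.End.mul_apply, ← Units.val_mul,
              ← map_mul, mul_inv_rev, mul_inv_cancel_left]
      _ = ∫ x, ρ₁ ((ρ x⁻¹ : V →ₗ[ℝ] V) (ν (x, g₂))) ∂μ :=
            integral_mul_right_eq_self (fun x => ρ₁ ((ρ x⁻¹ : V →ₗ[ℝ] V) (ν (x, g₂)))) g₁
      _ = _ := ρ₁.integral_comp_comm (hint _ (by fun_prop))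
  have hpointwise : ∀ x, (ρ x⁻¹ : V →ₗ[ℝ] V) (ν (x * g₁, g₂)) + (ρ x⁻¹ : V →ₗ[ℝ] V) (ν (x, g₁))
      = (ρ x⁻¹ : V →ₗ[ℝ] V) (ν (x, g₁ * g₂)) + ν (g₁, g₂) := fun x => by
    simpa [← Module.End.mul_apply, ← Units.val_mul, ← map_mul] using
      congrArg (ρ x⁻¹ : V →ₗ[ℝ] V) (hν x g₁ g₂)
  have hintegrated := integral_congr_ae (μ := μ) (Filter.Eventually.of_forall hpointwise)
  rw [integral_add (hint _ (by fun_prop)) (hint _ (by fun_prop)),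
    integral_add (hint _ (by fun_prop)) (integrable_const _), integral_const,
    htranslate] at hintegrated
  simp only [coboundary, cochainAverage_apply, probReal_univ, one_smul] at hintegrated ⊢
  linear_combination (norm := module) hintegrated

end Averaging

theorem mul_apply_eq_apply_act_mul {H V : Type*} [Group H] [AddCommGroup V] [Module ℝ V]
    {ε : V → H} {α : H →* (V →ₗ[ℝ] V)ˣ}
    (hεα : ∀ (h : H) (v : V), ε ((α h : V →ₗ[ℝ] V) v) = h * ε v * h⁻¹) (h : H) (v : V) :
    h * ε v = ε ((α h : V →ₗ[ℝ] V) v) * h := by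
  rw [hεα]
  group

section Gauge

variable {G H V : Type*} [Group G] [TopologicalSpace G] [Group H] [TopologicalSpace H]
  [NormedAddCommGroup V] [NormedSpace ℝ V]
  {ε : V → H} {α : H →* (V →ₗ[ℝ] V)ˣ} {ρ : G →* (V →ₗ[ℝ] V)ˣ}

theorem IsCocyclePair.gauge (hε_hom : ∀ v w : V, ε (v + w) = ε v * ε w)
    (hεα : ∀ (h : H) (v : V), ε ((α h : V →ₗ[ℝ] V) v) = h * ε v * h⁻¹)
    (hαε : ∀ v : V, α (ε v) = 1)
    {p q : C(G, H) × C(G × G, V)} (hp : IsCocyclePair ε α ρ p) {φ : G → V} (hφ : φ 1 = 0)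
    (hq₁ : ∀ g, q.1 g = ε (φ g) * p.1 g) (hq₂ : ⇑q.2 = p.2 - coboundary ρ φ) :
    IsCocyclePair ε α ρ q := by
  obtain ⟨⟨hζ₁, hν₁⟩, hζ_mul, hν_cocycle, hαζ⟩ := hp
  have hε₀ : ε 0 = 1 := by simpa using hε_hom 0 0
  refine ⟨⟨?_, fun g => ⟨?_, ?_⟩⟩, fun g₁ g₂ => ?_, ?_, fun g => ?_⟩
  · rw [hq₁, hφ, hε₀, hζ₁, one_mul]
  · simp [hq₂, coboundary, hν₁, hφ]
  · simp [hq₂, coboundary, hν₁, hφ]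
  · have hsum : q.2 (g₁, g₂) + φ g₁ + (ρ g₁ : V →ₗ[ℝ] V) (φ g₂) = φ (g₁ * g₂) + p.2 (g₁, g₂) := by
      rw [hq₂, Pi.sub_apply, coboundary]
      abel
    have hcomm : p.1 g₁ * ε (φ g₂) = ε ((ρ g₁ : V →ₗ[ℝ] V) (φ g₂)) * p.1 g₁ := by
      rw [mul_apply_eq_apply_act_mul hεα, hαζ]
    calc q.1 (g₁ * g₂) = ε (φ (g₁ * g₂)) * (ε (p.2 (g₁, g₂)) * p.1 g₁ * p.1 g₂) := by
          rw [hq₁, hζ_mul]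
      _ = ε (q.2 (g₁, g₂) + φ g₁ + (ρ g₁ : V →ₗ[ℝ] V) (φ g₂)) * p.1 g₁ * p.1 g₂ := by
          rw [hsum, hε_hom]
          group
      _ = ε (q.2 (g₁, g₂)) * ε (φ g₁) * (ε ((ρ g₁ : V →ₗ[ℝ] V) (φ g₂)) * p.1 g₁) * p.1 g₂ := by
          rw [hε_hom, hε_hom]
          group
      _ = ε (q.2 (g₁, g₂)) * q.1 g₁ * q.1 g₂ := by
          rw [← hcomm, hq₁, hq₁]
          group
  · exact hq₂ ▸ IsTwoCocycle.sub hν_cocycle (isTwoCocycle_coboundary φ)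
  · rw [hq₁, map_mul, hαε, one_mul, hαζ]

end Gauge

section Homotopy

variable {G H V : Type*} [Group G] [TopologicalSpace G] [IsTopologicalGroup G] [CompactSpace G]
  [MeasurableSpace G] [OpensMeasurableSpace G] (μ : Measure G) [IsProbabilityMeasure μ]
  [Group H] [TopologicalSpace H] [IsTopologicalGroup H]
  [NormedAddCommGroup V] [NormedSpace ℝ V] {ρ : G →* (V →ₗ[ℝ] V)ˣ}
  (hρ : Continuous fun p : G × V => (ρ p.1 : V →ₗ[ℝ] V) p.2) (ε : C(V, H))

/-- The paper's `K_t`; on cocycle pairs `ν - t • d(H ν) = (1 - t) • ν`. -/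
noncomputable def cocyclePairHomotopy (t : ℝ) (p : C(G, H) × C(G × G, V)) :
    C(G, H) × C(G × G, V) :=
  (ε.comp (t • cochainAverage μ hρ p.2) * p.1, (1 - t) • p.2)

theorem continuous_cocyclePairHomotopy :
    Continuous fun x : ℝ × (C(G, H) × C(G × G, V)) => cocyclePairHomotopy μ hρ ε x.1 x.2 :=
  .prodMk (.mul ((ContinuousMap.continuous_postcomp ε).comp <|
      continuous_fst.smul <| (cochainAverage μ hρ).continuous.comp continuous_snd.snd)
    continuous_snd.fst) ((continuous_const.sub continuous_fst).smul continuous_snd.snd)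

variable {ε}

theorem cocyclePairHomotopy_zero (hε : ε 0 = 1) (p : C(G, H) × C(G × G, V)) :
    cocyclePairHomotopy μ hρ ε 0 p = p := by
  ext <;> simp [cocyclePairHomotopy, hε]

theorem cocyclePairHomotopy_of_snd_eq_zero (hε : ε 0 = 1) (t : ℝ) {p : C(G, H) × C(G × G, V)}
    (hp : p.2 = 0) : cocyclePairHomotopy μ hρ ε t p = p := by
  ext <;> simp [cocyclePairHomotopy, hp, hε]

theorem snd_cocyclePairHomotopy_one (p : C(G, H) × C(G × G, V)) :
    (cocyclePairHomotopy μ hρ ε 1 p).2 = 0 := by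
  simp [cocyclePairHomotopy]

theorem isCocyclePair_cocyclePairHomotopy [BorelSpace G] [μ.IsMulRightInvariant] [CompleteSpace V]
    {α : H →* (V →ₗ[ℝ] V)ˣ} (hε_hom : ∀ v w : V, ε (v + w) = ε v * ε w)
    (hεα : ∀ (h : H) (v : V), ε ((α h : V →ₗ[ℝ] V) v) = h * ε v * h⁻¹)
    (hαε : ∀ v : V, α (ε v) = 1) {p : C(G, H) × C(G × G, V)} (hp : IsCocyclePair ε α ρ p)
    (t : ℝ) : IsCocyclePair ε α ρ (cocyclePairHomotopy μ hρ ε t p) := by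
  refine hp.gauge hε_hom hεα hαε (φ := t • cochainAverage μ hρ p.2) ?_ (fun g => rfl) ?_
  · simp [cochainAverage_apply_one μ hρ fun g => (hp.1.2 g).1]
  · rw [coboundary_smul, IsTwoCocycle.coboundary_cochainAverage μ hρ hp.2.2.1]
    ext q
    simp [cocyclePairHomotopy, sub_smul]

end Homotopy

theorem cocycle_pair_strong_deformation_retract_general
    {G H V : Type*}
    [Group G] [TopologicalSpace G] [IsTopologicalGroup G] [CompactSpace G]
    [MeasurableSpace G] [BorelSpace G]
    (μ : Measure G) [IsProbabilityMeasure μ] [μ.IsMulRightInvariant]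
    [Group H] [TopologicalSpace H] [IsTopologicalGroup H]
    [NormedAddCommGroup V] [NormedSpace ℝ V] [FiniteDimensional ℝ V]
    (ε : V → H) (hε_cont : Continuous ε)
    (hε_hom : ∀ v w : V, ε (v + w) = ε v * ε w)
    (α : H →* (V →ₗ[ℝ] V)ˣ) (ρ : G →* (V →ₗ[ℝ] V)ˣ)
    (hρ_cont : Continuous fun p : G × V => (ρ p.1 : V →ₗ[ℝ] V) p.2)
    (hεα : ∀ (h : H) (v : V), ε ((α h : V →ₗ[ℝ] V) v) = h * ε v * h⁻¹)
    (hαε : ∀ v : V, α (ε v) = 1) :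
    ∃ K : unitInterval × {p : C(G, H) × C(G × G, V) // IsCocyclePair ε α ρ p}
        → {p : C(G, H) × C(G × G, V) // IsCocyclePair ε α ρ p},
      Continuous K
      ∧ (∀ x, K (0, x) = x)
      ∧ (∀ (t : unitInterval) x, x.1.2 = 0 → K (t, x) = x)
      ∧ (∀ x, (K (1, x)).1.2 = 0) := by
  let εc : C(V, H) := ⟨ε, hε_cont⟩
  have hε₀ : ε 0 = 1 := by simpa using hε_hom 0 0
  refine ⟨fun x => ⟨cocyclePairHomotopy μ hρ_cont εc x.1 x.2.1,
      isCocyclePair_cocyclePairHomotopy μ hρ_cont hε_hom hεα hαε x.2.2 x.1⟩, ?_, ?_, ?_, ?_⟩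
  · exact ((continuous_cocyclePairHomotopy μ hρ_cont εc).comp
      (continuous_subtype_val.prodMap continuous_subtype_val)).subtype_mk _
  · exact fun x => Subtype.ext (cocyclePairHomotopy_zero μ hρ_cont hε₀ x.1)
  · exact fun t x hx => Subtype.ext (cocyclePairHomotopy_of_snd_eq_zero μ hρ_cont hε₀ t hx)
  · exact fun x => snd_cocyclePairHomotopy_one μ hρ_cont x.1

/-- The subspace `E⁰_ρ = {(ζ,ν) ∈ E_ρ : ν = 0}` is a strong deformation retract of
`E_ρ`, for a compact group `G` with right-invariant Haar probability measure, a
finite-dimensional real representation `V`, and crossed-module data `(ε, α)` over a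
topological group `H`. -/
theorem cocycle_pair_strong_deformation_retract
    {G H V : Type*}
    [Group G] [TopologicalSpace G] [IsTopologicalGroup G] [CompactSpace G] [T2Space G]
    [MeasurableSpace G] [BorelSpace G]
    (μ : Measure G) [IsProbabilityMeasure μ] [μ.IsMulRightInvariant]
    [Group H] [TopologicalSpace H] [IsTopologicalGroup H]
    [NormedAddCommGroup V] [NormedSpace ℝ V] [FiniteDimensional ℝ V]
    (ε : V → H) (hε_cont : Continuous ε)
    (hε_hom : ∀ v w : V, ε (v + w) = ε v * ε w)
    (α : H →* (V →ₗ[ℝ] V)ˣ) (ρ : G →* (V →ₗ[ℝ] V)ˣ)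
    (hα_cont : Continuous fun p : H × V => (α p.1 : V →ₗ[ℝ] V) p.2)
    (hρ_cont : Continuous fun p : G × V => (ρ p.1 : V →ₗ[ℝ] V) p.2)
    (hεα : ∀ (h : H) (v : V), ε ((α h : V →ₗ[ℝ] V) v) = h * ε v * h⁻¹)
    (hαε : ∀ v : V, α (ε v) = 1) :
    ∃ K : unitInterval × {p : C(G, H) × C(G × G, V) // IsCocyclePair ε α ρ p}
        → {p : C(G, H) × C(G × G, V) // IsCocyclePair ε α ρ p},
      Continuous K
      ∧ (∀ x, K (0, x) = x)
      ∧ (∀ (t : unitInterval) x, x.1.2 = 0 → K (t, x) = x)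
      ∧ (∀ x, (K (1, x)).1.2 = 0) :=
  cocycle_pair_strong_deformation_retract_general μ ε hε_cont hε_hom α ρ hρ_cont hεα hαε
end
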